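/- Let A and B be lattices with zero and C a sub-tensor product of A and B. If α, α′ are congruences of A and β, β′ congruences of B, then (α ⊙_C β) ≤ (α′ ⊠_C β′) if and only if α ≤ α′ or β ≤ β′. Here α ⊠_C β is the restriction to C of the congruence α □ β on bi-ideals, and α ⊙_C β = (α ⊠_C ω_B) ∧ (ω_A ⊠_C β). -/

import Mathlib

variable {A B : Type*} [SemilatticeSup A] [OrderBot A] [SemilatticeSup B] [OrderBot B]

/-- A bi-ideal of `A × B`: a downward closed subset containing
`∇ = (A × {0}) ∪ ({0} × B)` that is closed under lateral joins. -/
def IsBiIdeal (I : Set (A × B)) : Prop :=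
  (∀ ⦃p q : A × B⦄, q ≤ p → p ∈ I → q ∈ I) ∧
  (∀ a : A, (a, (⊥ : B)) ∈ I) ∧
  (∀ b : B, ((⊥ : A), b) ∈ I) ∧
  (∀ a₀ a₁ : A, ∀ b : B, (a₀, b) ∈ I → (a₁, b) ∈ I → (a₀ ⊔ a₁, b) ∈ I) ∧
  (∀ a : A, ∀ b₀ b₁ : B, (a, b₀) ∈ I → (a, b₁) ∈ I → (a, b₀ ⊔ b₁) ∈ I)

/-- `∇ = (A × {0}) ∪ ({0} × B)`, the least bi-ideal. -/
def nabla (A B : Type*) [SemilatticeSup A] [OrderBot A] [SemilatticeSup B] [OrderBot B] :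
    Set (A × B) := {p | p.1 = ⊥ ∨ p.2 = ⊥}

/-- The pure tensor `a ⊗ b`. -/
def pureTensor (a : A) (b : B) : Set (A × B) :=
  nabla A B ∪ {p | p.1 ≤ a ∧ p.2 ≤ b}

/-- The bi-ideal generated by a subset `X` of `A × B`. -/
def biGen (X : Set (A × B)) : Set (A × B) := ⋂₀ {K | IsBiIdeal K ∧ X ⊆ K}

/-- The join of two bi-ideals in the lattice of bi-ideals. -/
def biSup (I J : Set (A × B)) : Set (A × B) := biGen (I ∪ J)

/-- Elements of the tensor product `A ⊗ B`: the compact (finitely generated) bi-ideals. -/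
def IsTensorElt (I : Set (A × B)) : Prop := ∃ S : Finset (A × B), I = biGen ↑S

/-- A sub-tensor product of `A` and `B`: a set of elements of `A ⊗ B` containing
all pure and mixed tensors, closed under finite intersection, and forming a
lattice under containment. -/
def IsSubTensorProduct (C : Set (Set (A × B))) : Prop :=
  (∀ I ∈ C, IsTensorElt I) ∧
  (∀ a : A, ∀ b : B, pureTensor a b ∈ C) ∧
  (∀ a₀ a₁ : A, ∀ b₀ b₁ : B, ((a₀ ≤ a₁ ∧ b₁ ≤ b₀) ∨ (a₁ ≤ a₀ ∧ b₀ ≤ b₁)) →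
    biSup (pureTensor a₀ b₀) (pureTensor a₁ b₁) ∈ C) ∧
  (∀ I ∈ C, ∀ J ∈ C, I ∩ J ∈ C) ∧
  (∀ I ∈ C, ∀ J ∈ C, ∃ K ∈ C, I ⊆ K ∧ J ⊆ K ∧ ∀ L ∈ C, I ⊆ L → J ⊆ L → K ⊆ L)

/-- The join of `I` and `J` in the lattice `C` (least upper bound in `C`). -/
def joinC (C : Set (Set (A × B))) (I J : Set (A × B)) : Set (A × B) :=
  ⋂₀ {K | K ∈ C ∧ I ⊆ K ∧ J ⊆ K}

/-- A congruence of the lattice `C` (ordered by containment, with meet given by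
intersection and join given by `joinC`). -/
def IsCongOn (C : Set (Set (A × B))) (γ : Set (A × B) → Set (A × B) → Prop) : Prop :=
  (∀ I ∈ C, γ I I) ∧
  (∀ I ∈ C, ∀ J ∈ C, γ I J → γ J I) ∧
  (∀ I ∈ C, ∀ J ∈ C, ∀ K ∈ C, γ I J → γ J K → γ I K) ∧
  (∀ I ∈ C, ∀ I' ∈ C, ∀ J ∈ C, ∀ J' ∈ C, γ I I' → γ J J' →
    γ (I ∩ J) (I' ∩ J') ∧ γ (joinC C I J) (joinC C I' J'))

/-- The principal congruence `Θ_C(U, V)` of the lattice `C`. -/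
def princCongOn (C : Set (Set (A × B))) (U V : Set (A × B))
    (H K : Set (A × B)) : Prop :=
  ∀ γ : Set (A × B) → Set (A × B) → Prop, IsCongOn C γ → γ U V → γ H K

/-- The congruence `α □ β` on bi-ideals. -/
def boxCong (α : A → A → Prop) (β : B → B → Prop)
    (H K : Set (A × B)) : Prop :=
  (∀ p ∈ H, ∃ q ∈ K, α p.1 q.1 ∧ β p.2 q.2) ∧
  (∀ q ∈ K, ∃ p ∈ H, α q.1 p.1 ∧ β q.2 p.2)

/-- A lattice congruence on a lattice `L`. -/
def IsLatCong {L : Type*} [Lattice L] (α : L → L → Prop) : Prop :=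
  Equivalence α ∧
  ∀ x x' y y' : L, α x x' → α y y' → α (x ⊔ y) (x' ⊔ y') ∧ α (x ⊓ y) (x' ⊓ y')

/-- The principal lattice congruence `Θ(u, v)` on a lattice `L`. -/
def princCong {L : Type*} [Lattice L] (u v : L) (x y : L) : Prop :=
  ∀ α : L → L → Prop, IsLatCong α → α u v → α x y

/-! If `α ≰ α'` and `β ≰ β'`, pick `a < b` with `a ≡ b (α)` but not `(α')` (replacing a pair
`x, y` by `x ⊓ y, x ⊔ y`), and likewise `c < d` for `β, β'`. The mixed tensor
`H = a ⊗ d ∨ b ⊗ c` and the pure tensor `K = b ⊗ d` are identified by `α □ ω` (meeting the first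
coordinate of a point of `K` with `a` moves it into `a ⊗ d`) and by `ω □ β`. They are not
identified by `α' □ β'`: the generator `(b, d)` of `K` could only be matched by a point of `H`
lying below `a` or below `c`, and convexity of congruence classes would give `a ≡ b (α')` or
`c ≡ d (β')`. The converse is monotonicity of `□`. -/

section LatCong

variable {L : Type*} [Lattice L] {α : L → L → Prop}

theorem IsLatCong.sup_right (hα : IsLatCong α) {x y : L} (hxy : α x y) (z : L) :
    α (x ⊔ z) (y ⊔ z) :=
  (hα.2 x y z z hxy (hα.1.refl z)).1

theorem IsLatCong.inf_left (hα : IsLatCong α) {x y : L} (hxy : α x y) (z : L) :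
    α (z ⊓ x) (z ⊓ y) :=
  (hα.2 z z x y (hα.1.refl z) hxy).2

theorem IsLatCong.of_le_of_le (hα : IsLatCong α) {l m u : L} (hlu : α l u) (hlm : l ≤ m)
    (hmu : m ≤ u) : α m u := by
  simpa [sup_eq_right.2 hlm, sup_eq_left.2 hmu] using hα.sup_right hlu m

theorem IsLatCong.rel_iff_rel_inf_sup (hα : IsLatCong α) {x y : L} :
    α x y ↔ α (x ⊓ y) (x ⊔ y) := by
  constructor
  · intro hxy
    have hinf : α x (x ⊓ y) := by simpa using hα.inf_left hxy x
    have hsup : α (x ⊔ y) y := by simpa using hα.sup_right hxy y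
    exact hα.1.trans (hα.1.symm hinf) (hα.1.trans hxy (hα.1.symm hsup))
  · intro h
    have hx : α x (x ⊔ y) := hα.of_le_of_le h inf_le_left le_sup_left
    have hy : α y (x ⊔ y) := hα.of_le_of_le h inf_le_right le_sup_right
    exact hα.1.trans hx (hα.1.symm hy)

end LatCong

theorem mem_pureTensor {a : A} {b : B} {p : A × B} :
    p ∈ pureTensor a b ↔ p.1 = ⊥ ∨ p.2 = ⊥ ∨ (p.1 ≤ a ∧ p.2 ≤ b) := by
  simp [pureTensor, nabla, or_assoc]

theorem pureTensor_mono {a a' : A} {b b' : B} (ha : a ≤ a') (hb : b ≤ b') :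
    pureTensor a b ⊆ pureTensor a' b' :=
  Set.union_subset_union_right _ fun _ hp => ⟨hp.1.trans ha, hp.2.trans hb⟩

theorem subset_biGen (X : Set (A × B)) : X ⊆ biGen X :=
  fun _ hp => Set.mem_sInter.2 fun _ hK => hK.2 hp

theorem biGen_subset {X K : Set (A × B)} (hK : IsBiIdeal K) (hXK : X ⊆ K) : biGen X ⊆ K :=
  Set.sInter_subset_of_mem ⟨hK, hXK⟩

theorem IsBiIdeal.inter {I J : Set (A × B)} (hI : IsBiIdeal I) (hJ : IsBiIdeal J) :
    IsBiIdeal (I ∩ J) :=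
  ⟨fun _ _ hqp hp => ⟨hI.1 hqp hp.1, hJ.1 hqp hp.2⟩,
    fun a => ⟨hI.2.1 a, hJ.2.1 a⟩,
    fun b => ⟨hI.2.2.1 b, hJ.2.2.1 b⟩,
    fun a₀ a₁ b h₀ h₁ => ⟨hI.2.2.2.1 a₀ a₁ b h₀.1 h₁.1, hJ.2.2.2.1 a₀ a₁ b h₀.2 h₁.2⟩,
    fun a b₀ b₁ h₀ h₁ => ⟨hI.2.2.2.2 a b₀ b₁ h₀.1 h₁.1, hJ.2.2.2.2 a b₀ b₁ h₀.2 h₁.2⟩⟩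

theorem isBiIdeal_pureTensor (a : A) (b : B) : IsBiIdeal (pureTensor a b) := by
  refine ⟨fun p q hqp hp => ?_, fun x => ?_, fun y => ?_, fun x₀ x₁ y h₀ h₁ => ?_,
    fun x y₀ y₁ h₀ h₁ => ?_⟩ <;> simp only [mem_pureTensor] at *
  · rcases hp with h | h | ⟨h₁, h₂⟩
    · exact Or.inl (le_bot_iff.1 (h ▸ hqp.1))
    · exact Or.inr (Or.inl (le_bot_iff.1 (h ▸ hqp.2)))
    · exact Or.inr (Or.inr ⟨hqp.1.trans h₁, hqp.2.trans h₂⟩)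
  · simp
  · simp
  · rcases h₀ with h₀ | h₀ | h₀ <;> rcases h₁ with h₁ | h₁ | h₁ <;> simp_all
  · rcases h₀ with h₀ | h₀ | h₀ <;> rcases h₁ with h₁ | h₁ | h₁ <;> simp_all

theorem isBiIdeal_setOf_fst_le_or_snd_le (a : A) (b : B) :
    IsBiIdeal {p : A × B | p.1 ≤ a ∨ p.2 ≤ b} := by
  refine ⟨fun p q hqp hp => ?_, fun x => ?_, fun y => ?_, fun x₀ x₁ y h₀ h₁ => ?_,
    fun x y₀ y₁ h₀ h₁ => ?_⟩ <;> simp only [Set.mem_ofPred_eq] at *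
  · exact hp.imp hqp.1.trans hqp.2.trans
  · simp
  · simp
  · by_cases hy : y ≤ b
    · exact Or.inr hy
    · exact Or.inl (sup_le (h₀.resolve_right hy) (h₁.resolve_right hy))
  · by_cases hx : x ≤ a
    · exact Or.inl hx
    · exact Or.inr (sup_le (h₀.resolve_left hx) (h₁.resolve_left hx))

theorem biSup_pureTensor_subset {a b : A} {c d : B} (hab : a ≤ b) (hcd : c ≤ d) :
    biSup (pureTensor a d) (pureTensor b c) ⊆ pureTensor b d ∩ {p | p.1 ≤ a ∨ p.2 ≤ c} := by
  refine biGen_subset ((isBiIdeal_pureTensor b d).inter (isBiIdeal_setOf_fst_le_or_snd_le a c))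
    (Set.union_subset (Set.subset_inter (pureTensor_mono hab le_rfl) ?_)
      (Set.subset_inter (pureTensor_mono le_rfl hcd) ?_))
  · rintro p ((h | h) | ⟨h₁, -⟩)
    exacts [Or.inl (h ▸ bot_le), Or.inr (h ▸ bot_le), Or.inl h₁]
  · rintro p ((h | h) | ⟨-, h₂⟩)
    exacts [Or.inl (h ▸ bot_le), Or.inr (h ▸ bot_le), Or.inr h₂]

theorem boxCong_of_subset {A B : Type*} {α : A → A → Prop} {β : B → B → Prop}
    (hα : ∀ x, α x x) (hβ : ∀ y, β y y) {H K : Set (A × B)} (hHK : H ⊆ K)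
    (hK : ∀ q ∈ K, ∃ p ∈ H, α q.1 p.1 ∧ β q.2 p.2) : boxCong α β H K :=
  ⟨fun p hp => ⟨p, hHK hp, hα _, hβ _⟩, hK⟩

theorem boxCong.mono {A B : Type*} {α α' : A → A → Prop} {β β' : B → B → Prop}
    {H K : Set (A × B)} (h : boxCong α β H K) (hα : ∀ x y, α x y → α' x y)
    (hβ : ∀ x y, β x y → β' x y) : boxCong α' β' H K :=
  ⟨fun p hp => (h.1 p hp).imp fun _ ⟨hq, h₁, h₂⟩ => ⟨hq, hα _ _ h₁, hβ _ _ h₂⟩,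
    fun q hq => (h.2 q hq).imp fun _ ⟨hp, h₁, h₂⟩ => ⟨hp, hα _ _ h₁, hβ _ _ h₂⟩⟩

section MixedTensor

variable {A B : Type*} [Lattice A] [OrderBot A] [Lattice B] [OrderBot B] {a b : A} {c d : B}

theorem boxCong_eq_biSup_pureTensor_left {α : A → A → Prop} (hα : IsLatCong α) (hab : a ≤ b)
    (hcd : c ≤ d) (h : α a b) :
    boxCong α (· = ·) (biSup (pureTensor a d) (pureTensor b c)) (pureTensor b d) := by
  have hleft : pureTensor a d ⊆ biSup (pureTensor a d) (pureTensor b c) :=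
    Set.subset_union_left.trans (subset_biGen _)
  refine boxCong_of_subset hα.1.refl (fun _ => rfl)
    (fun p hp => (biSup_pureTensor_subset hab hcd hp).1) fun q hq => ?_
  rcases hq with hq | ⟨h₁, h₂⟩
  · exact ⟨q, hleft (Or.inl hq), hα.1.refl _, rfl⟩
  · refine ⟨(q.1 ⊓ a, q.2), hleft (Or.inr ⟨inf_le_right, h₂⟩), ?_, rfl⟩
    simpa [inf_eq_left.2 h₁] using hα.1.symm (hα.inf_left h q.1)

theorem boxCong_eq_biSup_pureTensor_right {β : B → B → Prop} (hβ : IsLatCong β) (hab : a ≤ b)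
    (hcd : c ≤ d) (h : β c d) :
    boxCong (· = ·) β (biSup (pureTensor a d) (pureTensor b c)) (pureTensor b d) := by
  have hright : pureTensor b c ⊆ biSup (pureTensor a d) (pureTensor b c) :=
    Set.subset_union_right.trans (subset_biGen _)
  refine boxCong_of_subset (fun _ => rfl) hβ.1.refl
    (fun p hp => (biSup_pureTensor_subset hab hcd hp).1) fun q hq => ?_
  rcases hq with hq | ⟨h₁, h₂⟩
  · exact ⟨q, hright (Or.inl hq), rfl, hβ.1.refl _⟩
  · refine ⟨(q.1, q.2 ⊓ c), hright (Or.inr ⟨h₁, inf_le_right⟩), rfl, ?_⟩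
    simpa [inf_eq_left.2 h₂] using hβ.1.symm (hβ.inf_left h q.2)

theorem not_boxCong_biSup_pureTensor {α : A → A → Prop} {β : B → B → Prop} (hα : IsLatCong α)
    (hβ : IsLatCong β) (hab : a ≤ b) (hcd : c ≤ d) (ha : ¬α a b) (hc : ¬β c d) :
    ¬boxCong α β (biSup (pureTensor a d) (pureTensor b c)) (pureTensor b d) := by
  rintro ⟨-, hK⟩
  obtain ⟨p, hp, hbp, hdp⟩ := hK (b, d) (Or.inr ⟨le_rfl, le_rfl⟩)
  rcases (biSup_pureTensor_subset hab hcd hp).2 with hpa | hpc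
  · exact ha (hα.of_le_of_le (hα.1.symm hbp) hpa hab)
  · exact hc (hβ.of_le_of_le (hβ.1.symm hdp) hpc hcd)

end MixedTensor

/-- `α ⊙_C β ≤ α′ ⊠_C β′` if and only if `α ≤ α′` or `β ≤ β′`. -/
theorem odot_le_boxtimes_iff {A B : Type*} [Lattice A] [OrderBot A]
    [Lattice B] [OrderBot B] (C : Set (Set (A × B))) (hC : IsSubTensorProduct C)
    (α α' : A → A → Prop) (hα : IsLatCong α) (hα' : IsLatCong α')
    (β β' : B → B → Prop) (hβ : IsLatCong β) (hβ' : IsLatCong β') :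
    (∀ H ∈ C, ∀ K ∈ C,
        (boxCong α (fun y y' : B => y = y') H K ∧
          boxCong (fun x x' : A => x = x') β H K) → boxCong α' β' H K) ↔
      ((∀ x y : A, α x y → α' x y) ∨ (∀ x y : B, β x y → β' x y)) := by
  constructor
  · intro h
    by_contra! hne
    obtain ⟨⟨x, y, hxy, hxy'⟩, u, v, huv, huv'⟩ := hne
    rw [hα.rel_iff_rel_inf_sup] at hxy
    rw [hα'.rel_iff_rel_inf_sup] at hxy'
    rw [hβ.rel_iff_rel_inf_sup] at huv
    rw [hβ'.rel_iff_rel_inf_sup] at huv'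
    have hHC := hC.2.2.1 (x ⊓ y) (x ⊔ y) (u ⊔ v) (u ⊓ v) (Or.inl ⟨inf_le_sup, inf_le_sup⟩)
    exact not_boxCong_biSup_pureTensor hα' hβ' inf_le_sup inf_le_sup hxy' huv'
      (h _ hHC _ (hC.2.1 _ _) ⟨boxCong_eq_biSup_pureTensor_left hα inf_le_sup inf_le_sup hxy,
        boxCong_eq_biSup_pureTensor_right hβ inf_le_sup inf_le_sup huv⟩)
  · rintro (h | h) H - K - ⟨hHKα, hHKβ⟩
    · exact hHKα.mono h fun x _ hxy => hxy ▸ hβ'.1.refl x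
    · exact hHKβ.mono (fun x _ hxy => hxy ▸ hα'.1.refl x) h
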